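/- Let p be an odd prime and a ∈ ℤ_p with residue ⟨a⟩. Then ∑_{k=0}^{p−1} C(2k,k)·C(a,k)·C(−1−a,k)·x^k ≡ ∑_{k=0}^{p−1} C(2k,k)·C(⟨a⟩,k)·C(⟨a⟩+k,k)·(−x)^k (mod p) for all x ∈ ℤ_p. -/

import Mathlib

/-!
For `k < p` the product `C(a,k)·C(−1−a,k)` is a polynomial in `a` with `p`-integral coefficients,
since its denominator `k!²` is prime to `p`; hence each summand only depends on `a` modulo `p`, and
`a` may be replaced by the natural number `r`. Upper negation `C(−1−r,k) = (−1)^k·C(r+k,k)` then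
turns the summand at `r` into the one on the right-hand side.
-/

/-- Generalized binomial coefficient C(a,k) = a(a-1)...(a-k+1)/k!. -/
def gchoose (a : ℚ) (k : ℕ) : ℚ :=
  (∏ i ∈ Finset.range k, (a - i)) / (Nat.factorial k : ℚ)

/-- `x` is a `p`-adic integer: its reduced denominator is not divisible by `p`. -/
def IsPInt (p : ℕ) (x : ℚ) : Prop := ¬ p ∣ x.den

/-- `x ≡ y (mod p^e)` for rationals: `(x - y)/p^e` is a `p`-adic integer. -/
def ModCong (p e : ℕ) (x y : ℚ) : Prop :=
  ∃ z : ℚ, ¬ p ∣ z.den ∧ x - y = (p : ℚ) ^ e * z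

/-- The Legendre polynomial `P_n(x) = ∑_{k=0}^n C(n,k) C(n+k,k) ((x-1)/2)^k`. -/
noncomputable def legendre (n : ℕ) : Polynomial ℚ :=
  ∑ k ∈ Finset.range (n + 1),
    Polynomial.C ((n.choose k : ℚ) * ((n + k).choose k)) *
      (Polynomial.C (1/2 : ℚ) * (Polynomial.X - 1)) ^ k

open Finset Nat

lemma gchoose_natCast (n k : ℕ) : gchoose n k = n.choose k := by
  rw [gchoose, ← descPochhammer_eval_eq_prod_range, descPochhammer_eval_eq_descFactorial,
    descFactorial_eq_factorial_mul_choose, cast_mul, mul_div_cancel_left₀ _ (by positivity)]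

lemma gchoose_neg_one_sub (a : ℚ) (k : ℕ) :
    gchoose (-1 - a) k = (-1) ^ k * gchoose (a + k) k := by
  have hprod : ∏ i ∈ range k, (-1 - a - i) = (-1) ^ k * ∏ i ∈ range k, (a + k - i) :=
    calc ∏ i ∈ range k, (-1 - a - i)
        = ∏ i ∈ range k, (-1) * (a + k - ↑(k - 1 - i)) := prod_congr rfl fun i hi => by
          rw [Nat.sub_sub, cast_sub (by have := mem_range.mp hi; omega : 1 + i ≤ k)]
          push_cast
          ring
      _ = (-1) ^ k * ∏ i ∈ range k, (a + k - i) := by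
          rw [prod_mul_distrib, prod_const, card_range, prod_range_reflect (fun i => a + k - i)]
  rw [gchoose, gchoose, hprod, mul_div_assoc]

section

variable {p : ℕ} [Fact p.Prime]

lemma isPInt_iff_mem_integer {x : ℚ} : IsPInt p x ↔ x ∈ (Rat.padicValuation p).integer :=
  Rat.padicValuation_le_one_iff.symm

lemma isPInt_one : IsPInt p 1 :=
  isPInt_iff_mem_integer.mpr (one_mem _)

lemma isPInt_natCast (n : ℕ) : IsPInt p n :=
  isPInt_iff_mem_integer.mpr (natCast_mem _ n)

lemma IsPInt.neg {x : ℚ} (hx : IsPInt p x) : IsPInt p (-x) := by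
  rw [isPInt_iff_mem_integer] at *
  exact neg_mem hx

lemma IsPInt.add {x y : ℚ} (hx : IsPInt p x) (hy : IsPInt p y) : IsPInt p (x + y) := by
  rw [isPInt_iff_mem_integer] at *
  exact add_mem hx hy

lemma IsPInt.sub {x y : ℚ} (hx : IsPInt p x) (hy : IsPInt p y) : IsPInt p (x - y) := by
  rw [isPInt_iff_mem_integer] at *
  exact sub_mem hx hy

lemma IsPInt.mul {x y : ℚ} (hx : IsPInt p x) (hy : IsPInt p y) : IsPInt p (x * y) := by
  rw [isPInt_iff_mem_integer] at *
  exact mul_mem hx hy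

lemma IsPInt.pow {x : ℚ} (hx : IsPInt p x) (k : ℕ) : IsPInt p (x ^ k) := by
  rw [isPInt_iff_mem_integer] at *
  exact pow_mem hx k

lemma isPInt_prod {ι : Type*} {s : Finset ι} {f : ι → ℚ} (h : ∀ i ∈ s, IsPInt p (f i)) :
    IsPInt p (∏ i ∈ s, f i) := by
  simp only [isPInt_iff_mem_integer] at *
  exact prod_mem h

lemma isPInt_inv_factorial {k : ℕ} (hk : k < p) : IsPInt p (k ! : ℚ)⁻¹ := by
  rw [IsPInt, Rat.inv_natCast_den, if_neg (factorial_ne_zero k),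
    (Fact.out : p.Prime).dvd_factorial]
  omega

lemma IsPInt.gchoose {a : ℚ} (ha : IsPInt p a) {k : ℕ} (hk : k < p) : IsPInt p (gchoose a k) :=
  (isPInt_prod fun i _ => ha.sub (isPInt_natCast i)).mul (isPInt_inv_factorial hk)

variable {e : ℕ}

lemma ModCong.refl (x : ℚ) : ModCong p e x x :=
  ⟨0, isPInt_natCast 0, by simp⟩

lemma ModCong.add {x y x' y' : ℚ} (h : ModCong p e x y) (h' : ModCong p e x' y') :
    ModCong p e (x + x') (y + y') := by
  obtain ⟨z, hz, he⟩ := h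
  obtain ⟨z', hz', he'⟩ := h'
  exact ⟨z + z', IsPInt.add hz hz', by linear_combination he + he'⟩

lemma ModCong.sub {x y x' y' : ℚ} (h : ModCong p e x y) (h' : ModCong p e x' y') :
    ModCong p e (x - x') (y - y') := by
  obtain ⟨z, hz, he⟩ := h
  obtain ⟨z', hz', he'⟩ := h'
  exact ⟨z - z', IsPInt.sub hz hz', by linear_combination he - he'⟩

lemma ModCong.mul_left {x y c : ℚ} (h : ModCong p e x y) (hc : IsPInt p c) :
    ModCong p e (c * x) (c * y) := by
  obtain ⟨z, hz, he⟩ := h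
  exact ⟨c * z, hc.mul hz, by linear_combination c * he⟩

lemma ModCong.mul_right {x y c : ℚ} (h : ModCong p e x y) (hc : IsPInt p c) :
    ModCong p e (x * c) (y * c) := by
  simpa only [mul_comm _ c] using h.mul_left hc

lemma ModCong.mul {x y x' y' : ℚ} (h : ModCong p e x y) (h' : ModCong p e x' y')
    (hy : IsPInt p y) (hx' : IsPInt p x') : ModCong p e (x * x') (y * y') := by
  obtain ⟨z, hz, he⟩ := h
  obtain ⟨z', hz', he'⟩ := h'
  exact ⟨z * x' + y * z', IsPInt.add (IsPInt.mul hz hx') (hy.mul hz'),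
    by linear_combination x' * he + y * he'⟩

lemma modCong_sum {ι : Type*} {s : Finset ι} {f g : ι → ℚ}
    (h : ∀ i ∈ s, ModCong p e (f i) (g i)) : ModCong p e (∑ i ∈ s, f i) (∑ i ∈ s, g i) := by
  classical
  induction s using Finset.induction_on with
  | empty => simpa using ModCong.refl 0
  | insert i s hi ih =>
    rw [sum_insert hi, sum_insert hi]
    exact (h i (mem_insert_self i s)).add (ih fun j hj => h j (mem_insert_of_mem hj))

lemma modCong_prod {ι : Type*} {s : Finset ι} {f g : ι → ℚ} (hf : ∀ i ∈ s, IsPInt p (f i))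
    (hg : ∀ i ∈ s, IsPInt p (g i)) (h : ∀ i ∈ s, ModCong p e (f i) (g i)) :
    ModCong p e (∏ i ∈ s, f i) (∏ i ∈ s, g i) := by
  classical
  induction s using Finset.induction_on with
  | empty => simpa using ModCong.refl 1
  | insert i s hi ih =>
    rw [prod_insert hi, prod_insert hi]
    exact (h i (mem_insert_self i s)).mul
      (ih (fun j hj => hf j (mem_insert_of_mem hj)) (fun j hj => hg j (mem_insert_of_mem hj))
        fun j hj => h j (mem_insert_of_mem hj))
      (hg i (mem_insert_self i s)) (isPInt_prod fun j hj => hf j (mem_insert_of_mem hj))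

lemma ModCong.gchoose {a b : ℚ} (h : ModCong p e a b) (ha : IsPInt p a) (hb : IsPInt p b)
    {k : ℕ} (hk : k < p) : ModCong p e (gchoose a k) (gchoose b k) := by
  simp only [_root_.gchoose, div_eq_mul_inv]
  refine ModCong.mul_right ?_ (isPInt_inv_factorial hk)
  exact modCong_prod (fun i _ => ha.sub (isPInt_natCast i)) (fun i _ => hb.sub (isPInt_natCast i))
    fun i _ => h.sub (.refl i)

end

theorem sum_cong_residue_sum_general (p : ℕ) (hp : p.Prime)
    (a x : ℚ) (ha : IsPInt p a) (hx : IsPInt p x)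
    (r : ℕ) (har : ModCong p 1 a r) :
    ModCong p 1
      (∑ k ∈ Finset.range p,
        ((2 * k).choose k : ℚ) * gchoose a k * gchoose (-1 - a) k * x ^ k)
      (∑ k ∈ Finset.range p,
        ((2 * k).choose k : ℚ) * (r.choose k) * ((r + k).choose k) * (-x) ^ k) := by
  have : Fact p.Prime := ⟨hp⟩
  refine modCong_sum fun k hk => ?_
  have hk : k < p := mem_range.mp hk
  have hr : IsPInt p r := isPInt_natCast r
  have hneg_a : IsPInt p (-1 - a) := isPInt_one.neg.sub ha
  have hneg_r : IsPInt p (-1 - r) := isPInt_one.neg.sub hr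
  have hG : ModCong p 1 (gchoose a k * gchoose (-1 - a) k) (gchoose r k * gchoose (-1 - r) k) :=
    (har.gchoose ha hr hk).mul (((ModCong.refl (-1)).sub har).gchoose hneg_a hneg_r hk)
      (hr.gchoose hk) (hneg_a.gchoose hk)
  convert hG.mul_left ((isPInt_natCast ((2 * k).choose k)).mul (hx.pow k)) using 1
  · ring
  · rw [gchoose_neg_one_sub, gchoose_natCast, ← cast_add, gchoose_natCast, neg_pow]
    ring

theorem sum_cong_residue_sum (p : ℕ) (hp : p.Prime) (hodd : Odd p)
    (a x : ℚ) (ha : IsPInt p a) (hx : IsPInt p x)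
    (r : ℕ) (hr : r < p) (har : ModCong p 1 a r) :
    ModCong p 1
      (∑ k ∈ Finset.range p,
        ((2 * k).choose k : ℚ) * gchoose a k * gchoose (-1 - a) k * x ^ k)
      (∑ k ∈ Finset.range p,
        ((2 * k).choose k : ℚ) * (r.choose k) * ((r + k).choose k) * (-x) ^ k) :=
  sum_cong_residue_sum_general p hp a x ha hx r har
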